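/- Let 𝒜 = ⟨Q, A, δ⟩ be an n-state automaton with an independent set W of k words with range R, let L_W be the maximal length of the words of W, and let M be the maximal cardinality of a reducible subset of R. Then for every state q ∈ R there exist a subset K ⊆ R and a word v which is either the empty word or of the form v'w with v' ∈ A* and w ∈ W, such that Card(K) = M, |v| ≤ (M − 1)(L_W + n + 1) − k·ln(M), and δ(K, v) = {q}. -/

import Mathlib

/-- The extension of a transition function `δ : Q → A → Q` to words. -/
def run {Q A : Type*} (δ : Q → A → Q) (q : Q) (u : List A) : Q := u.foldl δ q

/-- `W` is an independent set of words with range `R`. -/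
def IsIndependent {Q A : Type*} [DecidableEq Q] (δ : Q → A → Q)
    (W : Finset (List A)) (R : Finset Q) : Prop :=
  W.card = R.card ∧ ∀ s : Q, W.image (fun w => run δ s w) = R

/-- A set of states `K` is reducible if some word maps it to a singleton. -/
def Reducible {Q A : Type*} [DecidableEq Q] (δ : Q → A → Q) (K : Finset Q) : Prop :=
  ∃ (v : List A) (q : Q), K.image (fun p => run δ p v) = {q}

/-!
Grow a set `S ⊆ R` that some word of `A*W ∪ {ε}` maps onto `q`, starting from `{q}`. While
`m = |S| < M`, some `u w` with `w ∈ W` and `|u| ≤ n + 1 - k/m` sends more than `m` states of `R`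
into `S`. Otherwise, averaging over `W` (each state reaches `S` by exactly `m` words of `W`) shows
that every short `u` is balanced: `|{s ∈ R | δ(s, u w) ∈ S}| = m` for all `w ∈ W`. This is a
linear condition on the occupancy vector of `δ(R, u)`, whose solution space has dimension at most
`n + 1 - k/m`, since the indicator rows of `δ⁻¹(S, w)` span a space of dimension at least `k/m`.
Closing the span of occupancy vectors under letters then makes every word balanced, which a
reducible set of size `M` contradicts. A step from `m` states costs at most `L + n + 1 - k/m`,
and `∑ k/m ≥ k ln M`.
-/

open Finset Module Submodule Matrix

section WordSpan

variable (K : Type*) {V A : Type*} [Field K] [AddCommGroup V] [Module K V]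

def wordSpan (ρ : List A → V) (j : ℕ) : Submodule K V := span K (ρ '' {u | u.length < j})

variable {K} {ρ : List A → V}

theorem mem_wordSpan {j : ℕ} {u : List A} (hu : u.length < j) : ρ u ∈ wordSpan K ρ j :=
  subset_span ⟨u, hu, rfl⟩

theorem wordSpan_mono : Monotone (wordSpan K ρ) := fun _ _ hij =>
  span_mono (Set.image_mono fun _ hu => lt_of_lt_of_le hu hij)

variable {P : A → V →ₗ[K] V} (hρ : ∀ u a, ρ (u ++ [a]) = P a (ρ u))
include hρ

theorem map_wordSpan_le (a : A) (j : ℕ) :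
    (wordSpan K ρ j).map (P a) ≤ wordSpan K ρ (j + 1) := by
  rw [wordSpan, map_span, span_le]
  rintro _ ⟨_, ⟨u, hu, rfl⟩, rfl⟩
  rw [← hρ]
  exact mem_wordSpan (by simpa using hu)

theorem mem_wordSpan_of_succ_eq {j : ℕ} (h : wordSpan K ρ (j + 1) = wordSpan K ρ j)
    (u : List A) : ρ u ∈ wordSpan K ρ j := by
  induction u using List.reverseRecOn with
  | nil => exact h ▸ mem_wordSpan (Nat.succ_pos j)
  | append_singleton u a ih =>
    rw [hρ, ← h]
    exact map_wordSpan_le hρ a j (mem_map_of_mem ih)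

omit hρ in
theorem le_finrank_wordSpan [FiniteDimensional K V] {d : ℕ}
    (h : ∀ j < d, wordSpan K ρ j < wordSpan K ρ (j + 1)) :
    d ≤ finrank K (wordSpan K ρ d) := by
  induction d with
  | zero => exact Nat.zero_le _
  | succ d ih =>
    have := finrank_lt_finrank_of_lt (h d d.lt_succ_self)
    have := ih fun j hj => h j (hj.trans d.lt_succ_self)
    omega

theorem mem_of_forall_length_le_finrank [FiniteDimensional K V] {U : Submodule K V}
    (hU : ∀ u : List A, u.length ≤ finrank K U → ρ u ∈ U) (u : List A) : ρ u ∈ U := by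
  have hle : wordSpan K ρ (finrank K U + 1) ≤ U := by
    rw [wordSpan, span_le]
    rintro _ ⟨v, hv, rfl⟩
    exact hU v (Nat.lt_succ_iff.1 hv)
  obtain ⟨j, hj, hstab⟩ :
      ∃ j < finrank K U + 1, ¬ wordSpan K ρ j < wordSpan K ρ (j + 1) := by
    by_contra! h
    have := (le_finrank_wordSpan h).trans (finrank_mono hle)
    omega
  have heq := ((wordSpan_mono j.le_succ).lt_or_eq.resolve_left hstab).symm
  exact hle (wordSpan_mono hj.le (mem_wordSpan_of_succ_eq hρ heq u))

end WordSpan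

theorem card_filter_ne_zero_le_finrank_mul {ι K : Type*} [Fintype ι] [Field K] [DecidableEq K]
    (T : Finset ι) {s : Set (ι → K)} {m : ℕ} (hs : ∀ f ∈ s, #{i ∈ T | f i ≠ 0} ≤ m)
    {v : ι → K} (hv : v ∈ span K s) : #{i ∈ T | v i ≠ 0} ≤ finrank K (span K s) * m := by
  classical
  obtain ⟨b, hbs, hspan, hli⟩ := exists_linearIndependent K s
  lift b to Finset (ι → K) using hli.setFinite
  rw [← hspan] at hv ⊢
  obtain ⟨c, -, rfl⟩ := mem_span_finset.1 hv
  have hsupp : {i ∈ T | (∑ f ∈ b, c f • f) i ≠ 0} ⊆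
      b.biUnion fun f => {i ∈ T | f i ≠ 0} := by
    intro i hi
    rw [mem_filter, Finset.sum_apply] at hi
    obtain ⟨f, hf, hfi⟩ := exists_ne_zero_of_sum_ne_zero hi.2
    exact mem_biUnion.2 ⟨f, hf, mem_filter.2 ⟨hi.1, right_ne_zero_of_mul hfi⟩⟩
  calc #{i ∈ T | (∑ f ∈ b, c f • f) i ≠ 0}
      ≤ ∑ f ∈ b, #{i ∈ T | f i ≠ 0} := (card_le_card hsupp).trans card_biUnion_le
    _ ≤ #b * m := sum_le_card_nsmul _ _ _ fun f hf => hs f (hbs hf)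
    _ = finrank K (span K (b : Set (ι → K))) * m := by
      rw [finrank_span_finset_eq_card hli]

theorem Matrix.rank_add_le {m n K : Type*} [Fintype m] [Fintype n] [Field K]
    (A B : Matrix m n K) : (A + B).rank ≤ A.rank + B.rank := by
  unfold Matrix.rank
  rw [Matrix.mulVecLin_add]
  exact (Submodule.finrank_mono (LinearMap.range_add_le _ _)).trans
    (Submodule.finrank_add_le_finrank_add_finrank _ _)

section Automaton

variable {Q A : Type*} (δ : Q → A → Q)

theorem run_append (s : Q) (u v : List A) : run δ s (u ++ v) = run δ (run δ s u) v :=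
  List.foldl_append

theorem run_append_singleton (s : Q) (u : List A) (a : A) :
    run δ s (u ++ [a]) = δ (run δ s u) a :=
  run_append δ s u [a]

variable [DecidableEq Q]

def runPreimage (R S : Finset Q) (u : List A) : Finset Q := {s ∈ R | run δ s u ∈ S}

theorem image_run_append_eq_singleton {S S' : Finset Q} {u v : List A} {q : Q}
    (hS' : S'.Nonempty) (hu : ∀ s ∈ S', run δ s u ∈ S) (hv : S.image (run δ · v) = {q}) :
    S'.image (run δ · (u ++ v)) = {q} := by
  refine eq_singleton_iff_nonempty_unique_mem.2 ⟨hS'.image _, ?_⟩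
  simp only [mem_image, forall_exists_index, and_imp, forall_apply_eq_imp_iff₂, run_append]
  intro s hs
  exact mem_singleton.1 (hv ▸ mem_image_of_mem _ (hu s hs))

def EndsInWord (W : Finset (List A)) (v : List A) : Prop :=
  v = [] ∨ ∃ v' w, w ∈ W ∧ v = v' ++ w

theorem EndsInWord.append_left {W : Finset (List A)} {v : List A} (hv : EndsInWord W v)
    (u : List A) {w : List A} (hw : w ∈ W) : EndsInWord W (u ++ w ++ v) := by
  right
  rcases hv with rfl | ⟨v', w', hw', rfl⟩
  · exact ⟨u, w, hw, List.append_nil _⟩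
  · exact ⟨u ++ w ++ v', w', hw', (List.append_assoc _ _ _).symm⟩

variable {δ} {W : Finset (List A)} {R : Finset Q}

theorem IsIndependent.exists_run_eq (hW : IsIndependent δ W R) (p : Q) {r : Q} (hr : r ∈ R) :
    ∃ w ∈ W, run δ p w = r :=
  mem_image.1 ((hW.2 p).symm ▸ hr)

theorem IsIndependent.card_filter_run_mem (hW : IsIndependent δ W R) {S : Finset Q}
    (hS : S ⊆ R) (p : Q) : #{w ∈ W | run δ p w ∈ S} = #S := by
  have hinj : Set.InjOn (run δ p) W := by
    rw [← card_image_iff, hW.2 p, hW.1]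
  rw [← card_image_of_injOn (hinj.mono (filter_subset _ _)), ← filter_image (p := (· ∈ S)),
    hW.2 p, filter_mem_eq_inter, inter_eq_right.2 hS]

theorem IsIndependent.sum_card_runPreimage (hW : IsIndependent δ W R) {S : Finset Q}
    (hS : S ⊆ R) (u : List A) : ∑ w ∈ W, #(runPreimage δ R S (u ++ w)) = #R * #S := by
  simp only [runPreimage, card_filter, run_append]
  rw [sum_comm]
  simp only [← card_filter, hW.card_filter_run_mem hS, sum_const, smul_eq_mul]

end Automaton

section Occupancy

variable {Q A : Type*} [Fintype Q] [DecidableEq Q] (δ : Q → A → Q)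

noncomputable def occupancy (R : Finset Q) (u : List A) : Q → ℝ :=
  ∑ s ∈ R, Pi.single (run δ s u) 1

noncomputable def transitionMap (a : A) : (Q → ℝ) →ₗ[ℝ] Q → ℝ :=
  (Pi.basisFun ℝ Q).constr ℝ fun p => Pi.single (δ p a) 1

theorem occupancy_append_singleton (R : Finset Q) (u : List A) (a : A) :
    occupancy δ R (u ++ [a]) = transitionMap δ a (occupancy δ R u) := by
  simp only [occupancy, map_sum, transitionMap, run_append_singleton]
  refine sum_congr rfl fun s _ => ?_
  simp

theorem mulVec_occupancy {ι : Type*} (M : Matrix ι Q ℝ) (R : Finset Q) (u : List A) :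
    M *ᵥ occupancy δ R u = fun i => ∑ s ∈ R, M i (run δ s u) := by
  ext i
  simp [occupancy, mulVec_sum, mulVec_single]

noncomputable def hitMatrix (W : Finset (List A)) (S : Finset Q) : Matrix W Q ℝ :=
  Matrix.of fun w p => if run δ p w ∈ S then 1 else 0

variable {δ} {W : Finset (List A)} {R S : Finset Q}

theorem card_le_rank_hitMatrix_mul (hW : IsIndependent δ W R) (hS : S ⊆ R) (hSne : S.Nonempty)
    (h : ∀ w ∈ W, #(runPreimage δ R S w) = #S) : #R ≤ (hitMatrix δ W S).rank * #S := by
  -- The rows sum to the constant `#S`, while each row has only `#S` nonzero entries on `R`.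
  have hsum : (fun _ => (#S : ℝ)) = ∑ w : W, (hitMatrix δ W S).row w := by
    ext p
    rw [Finset.sum_apply, ← hW.card_filter_run_mem hS p, ← sum_boole]
    exact (sum_coe_sort W _).symm
  have hmem : (fun _ => (#S : ℝ)) ∈ span ℝ (Set.range (hitMatrix δ W S).row) :=
    hsum ▸ sum_mem fun w _ => subset_span ⟨w, rfl⟩
  have := card_filter_ne_zero_le_finrank_mul R (m := #S) ?_ hmem
  · rw [Matrix.rank_eq_finrank_span_row]
    simpa [hSne.ne_empty] using this
  · rintro _ ⟨w, rfl⟩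
    simpa [hitMatrix, Matrix.row, runPreimage] using (h w w.2).le

variable (δ W R S) in
noncomputable def balanceMatrix : Matrix W Q ℝ :=
  hitMatrix δ W S - vecMulVec (fun _ => (#S / #R : ℝ)) 1

theorem occupancy_mem_ker_balanceMatrix_iff (hR : R.Nonempty) (u : List A) :
    occupancy δ R u ∈ LinearMap.ker (balanceMatrix δ W R S).mulVecLin ↔
      ∀ w ∈ W, #(runPreimage δ R S (u ++ w)) = #S := by
  have hR0 : (#R : ℝ) ≠ 0 := by exact_mod_cast hR.card_pos.ne'
  have hB : balanceMatrix δ W R S *ᵥ occupancy δ R u =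
      fun w : W => (#(runPreimage δ R S (u ++ w)) : ℝ) - #S := by
    ext w
    simp only [mulVec_occupancy, balanceMatrix, Matrix.sub_apply, hitMatrix, of_apply,
      vecMulVec_apply, Pi.one_apply, mul_one, sum_sub_distrib, sum_boole, sum_const, nsmul_eq_mul,
      runPreimage, run_append]
    field_simp
  rw [LinearMap.mem_ker, mulVecLin_apply, hB, funext_iff]
  simp [sub_eq_zero]

theorem finrank_ker_balanceMatrix_le (hW : IsIndependent δ W R) (hS : S ⊆ R) (hSne : S.Nonempty)
    (h : ∀ w ∈ W, #(runPreimage δ R S w) = #S) :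
    (finrank ℝ (LinearMap.ker (balanceMatrix δ W R S).mulVecLin) : ℝ) ≤
      Fintype.card Q + 1 - #R / #S := by
  set B := balanceMatrix δ W R S with hB
  have hrank : (hitMatrix δ W S).rank ≤ B.rank + 1 :=
    calc (hitMatrix δ W S).rank = (B + vecMulVec (fun _ => (#S / #R : ℝ)) 1).rank := by
          rw [hB, balanceMatrix, sub_add_cancel]
      _ ≤ B.rank + 1 := (rank_add_le _ _).trans (by gcongr; exact rank_vecMulVec_le _ _)
  have hRS : (#R / #S : ℝ) ≤ B.rank + 1 := by
    rw [div_le_iff₀ (by exact_mod_cast hSne.card_pos)]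
    exact_mod_cast (card_le_rank_hitMatrix_mul hW hS hSne h).trans (Nat.mul_le_mul_right _ hrank)
  have hker : finrank ℝ (LinearMap.ker B.mulVecLin) + B.rank = Fintype.card Q := by
    rw [add_comm, Matrix.rank, LinearMap.finrank_range_add_finrank_ker, finrank_fintype_fun_eq_card]
  have : (finrank ℝ (LinearMap.ker B.mulVecLin) : ℝ) + B.rank = Fintype.card Q := by
    exact_mod_cast hker
  linarith

theorem card_runPreimage_eq_of_forall_length_le (hW : IsIndependent δ W R) (hS : S ⊆ R)
    (hSne : S.Nonempty)
    (h : ∀ u : List A, (u.length : ℝ) ≤ Fintype.card Q + 1 - #R / #S →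
      ∀ w ∈ W, #(runPreimage δ R S (u ++ w)) = #S)
    (u : List A) : ∀ w ∈ W, #(runPreimage δ R S (u ++ w)) = #S := by
  have hR := hSne.mono hS
  have hRS : (#R / #S : ℝ) ≤ Fintype.card Q :=
    (div_le_self (by positivity) (by exact_mod_cast hSne.card_pos)).trans
      (by exact_mod_cast card_le_univ R)
  have hdim := finrank_ker_balanceMatrix_le hW hS hSne (by simpa using h [] (by simp; linarith))
  refine (occupancy_mem_ker_balanceMatrix_iff hR u).1 ?_
  refine mem_of_forall_length_le_finrank (occupancy_append_singleton δ R) (fun v hv => ?_) u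
  exact (occupancy_mem_ker_balanceMatrix_iff hR v).2 (h v ((Nat.cast_le.2 hv).trans hdim))

theorem exists_lt_card_runPreimage (hW : IsIndependent δ W R) (hS : S ⊆ R) (hSne : S.Nonempty)
    {K : Finset Q} (hKR : K ⊆ R) (hK : Reducible δ K) (hSK : #S < #K) :
    ∃ u, ∃ w ∈ W, (u.length : ℝ) ≤ Fintype.card Q + 1 - #R / #S ∧
      #S < #(runPreimage δ R S (u ++ w)) := by
  by_contra! hshort
  have hsum (u : List A) : ∑ w ∈ W, #(runPreimage δ R S (u ++ w)) = ∑ _w ∈ W, #S := by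
    rw [hW.sum_card_runPreimage hS, sum_const, hW.1, smul_eq_mul]
  have hbal := card_runPreimage_eq_of_forall_length_le hW hS hSne fun u hu =>
    (sum_eq_sum_iff_of_le fun w hw => hshort u w hw hu).1 (hsum u)
  obtain ⟨z, p, hz⟩ := hK
  obtain ⟨s, hs⟩ := hSne
  obtain ⟨w, hw, hpw⟩ := hW.exists_run_eq p (hS hs)
  have hKsub : K ⊆ runPreimage δ R S (z ++ w) := fun t ht => by
    have hzt : run δ t z = p := mem_singleton.1 (hz ▸ mem_image_of_mem (run δ · z) ht)
    rw [runPreimage, mem_filter, run_append, hzt, hpw]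
    exact ⟨hKR ht, hs⟩
  exact (card_le_card hKsub).not_gt (hbal z w hw ▸ hSK)

end Occupancy

/-- The length still allowed once the current set has `m` states: a step from `m` to `m' > m`
costs at most `B - k / m`, and `∑ k / m` over the steps dominates `k (ln M - ln m)`. -/
noncomputable def lengthBudget (B k : ℝ) (M m : ℕ) : ℝ :=
  (M - m) * B - k * (Real.log M - Real.log m)

theorem lengthBudget_self (B k : ℝ) (M : ℕ) : lengthBudget B k M M = 0 := by
  simp [lengthBudget]

theorem lengthBudget_step {B k : ℝ} (hk : 0 ≤ k) (hkB : k ≤ B) (M : ℕ) {m m' : ℕ}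
    (hm : 1 ≤ m) (hmm' : m < m') :
    B - k / m + lengthBudget B k M m' ≤ lengthBudget B k M m := by
  have hm0 : (0 : ℝ) < m := by exact_mod_cast hm
  have hmm : (m : ℝ) + 1 ≤ m' := by exact_mod_cast hmm'
  have hm'0 : (0 : ℝ) < m' := by linarith
  have hlog : Real.log m' - Real.log m ≤ (m' - m) / m := by
    rw [← Real.log_div hm'0.ne' hm0.ne']
    calc _ ≤ (m' / m : ℝ) - 1 := Real.log_le_sub_one_of_pos (div_pos hm'0 hm0)
      _ = _ := by field_simp
  have hkm : k / m ≤ B := (div_le_self hk (by exact_mod_cast hm)).trans hkB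
  have hklog : k * (Real.log m' - Real.log m) ≤ k / m * (m' - m) := by
    calc _ ≤ k * ((m' - m) / m) := mul_le_mul_of_nonneg_left hlog hk
      _ = _ := by ring
  have := mul_le_mul_of_nonneg_left hkm (by linarith : (0 : ℝ) ≤ m' - m - 1)
  unfold lengthBudget
  nlinarith

section Synchronization

variable {Q A : Type*} [Fintype Q] [DecidableEq Q] {δ : Q → A → Q} {W : Finset (List A)}
  {R : Finset Q}

theorem exists_card_eq_of_image_eq_singleton (hW : IsIndependent δ W R) {L : ℕ}
    (hL : ∀ w ∈ W, w.length ≤ L) {M : ℕ} (hMub : ∀ K ⊆ R, Reducible δ K → #K ≤ M)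
    {K₀ : Finset Q} (hK₀R : K₀ ⊆ R) (hK₀ : Reducible δ K₀) (hK₀M : #K₀ = M) {q : Q}
    {S : Finset Q} (hSR : S ⊆ R) (hSne : S.Nonempty) {y : List A} (hy : EndsInWord W y)
    (hSy : S.image (run δ · y) = {q}) :
    ∃ K v, K ⊆ R ∧ EndsInWord W v ∧ #K = M ∧
      (v.length : ℝ) ≤ y.length + lengthBudget (L + Fintype.card Q + 1) #R M #S ∧
      K.image (run δ · v) = {q} := by
  induction hd : M - #S using Nat.strong_induction_on generalizing S y with
  | _ d ih =>
  obtain hSM | hSM := (hMub S hSR ⟨y, q, hSy⟩).eq_or_lt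
  · exact ⟨S, y, hSR, hy, hSM, by simp [hSM, lengthBudget_self], hSy⟩
  obtain ⟨u, w, hw, hu, hlt⟩ :=
    exists_lt_card_runPreimage hW hSR hSne hK₀R hK₀ (hK₀M ▸ hSM)
  set S' := runPreimage δ R S (u ++ w)
  have hS'ne : S'.Nonempty := card_pos.1 (by omega)
  have hS'y : S'.image (run δ · (u ++ w ++ y)) = {q} :=
    image_run_append_eq_singleton δ hS'ne (fun s hs => (mem_filter.1 hs).2) hSy
  have hS'M := hMub S' (filter_subset _ _) ⟨_, q, hS'y⟩
  obtain ⟨K, v, hKR, hv, hKM, hlen, hKv⟩ :=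
    ih (M - #S') (by omega) (S := S') (filter_subset _ _) hS'ne (hy.append_left u hw) hS'y rfl
  refine ⟨K, v, hKR, hv, hKM, ?_, hKv⟩
  have hwL : (w.length : ℝ) ≤ L := by exact_mod_cast hL w hw
  have hRQ : (#R : ℝ) ≤ L + Fintype.card Q + 1 := by
    have : (#R : ℝ) ≤ Fintype.card Q := by exact_mod_cast card_le_univ R
    linarith [(L.cast_nonneg : (0 : ℝ) ≤ L)]
  have hstep := lengthBudget_step (by positivity) hRQ M hSne.card_pos hlt
  rw [List.length_append, List.length_append] at hlen
  push_cast at hlen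
  linarith

end Synchronization

theorem stmt_6_general {Q A : Type*} [Fintype Q] [DecidableEq Q]
    (δ : Q → A → Q) (W : Finset (List A)) (R : Finset Q) (k : ℕ)
    (hW : IsIndependent δ W R) (hk : W.card = k)
    (L : ℕ) (hLub : ∀ w ∈ W, w.length ≤ L)
    (M : ℕ)
    (hMub : ∀ K ⊆ R, Reducible δ K → K.card ≤ M)
    (hMmem : ∃ K ⊆ R, Reducible δ K ∧ K.card = M)
    (q : Q) (hq : q ∈ R) :
    ∃ (K : Finset Q) (v : List A), K ⊆ R ∧
      (v = [] ∨ ∃ (v' : List A) (w : List A), w ∈ W ∧ v = v' ++ w) ∧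
      K.card = M ∧
      (v.length : ℝ) ≤ ((M : ℝ) - 1) * ((L : ℝ) + (Fintype.card Q : ℝ) + 1)
        - (k : ℝ) * Real.log (M : ℝ) ∧
      K.image (fun p => run δ p v) = {q} := by
  obtain ⟨K₀, hK₀R, hK₀, hK₀M⟩ := hMmem
  obtain ⟨K, v, hKR, hv, hKM, hlen, hKv⟩ :=
    exists_card_eq_of_image_eq_singleton hW hLub hMub hK₀R hK₀ hK₀M
      (singleton_subset_iff.2 hq) (singleton_nonempty q) (Or.inl rfl : EndsInWord W [])
      (q := q) (by simp [run])
  refine ⟨K, v, hKR, hv, hKM, ?_, hKv⟩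
  simpa [lengthBudget, ← hk, hW.1] using hlen

/-- For every `q ∈ R` there exist `K ⊆ R` and a word `v ∈ A*W ∪ {ε}` such that
`Card K = M`, `|v| ≤ (M − 1)(L_W + n + 1) − k·ln M` and `δ(K, v) = {q}`. -/
theorem stmt_6 {Q A : Type*} [Fintype Q] [DecidableEq Q] [Fintype A]
    (δ : Q → A → Q) (W : Finset (List A)) (R : Finset Q) (k : ℕ)
    (hW : IsIndependent δ W R) (hk : W.card = k)
    (L : ℕ) (hLub : ∀ w ∈ W, w.length ≤ L) (hLmem : ∃ w ∈ W, w.length = L)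
    (M : ℕ)
    (hMub : ∀ K ⊆ R, Reducible δ K → K.card ≤ M)
    (hMmem : ∃ K ⊆ R, Reducible δ K ∧ K.card = M)
    (q : Q) (hq : q ∈ R) :
    ∃ (K : Finset Q) (v : List A), K ⊆ R ∧
      (v = [] ∨ ∃ (v' : List A) (w : List A), w ∈ W ∧ v = v' ++ w) ∧
      K.card = M ∧
      (v.length : ℝ) ≤ ((M : ℝ) - 1) * ((L : ℝ) + (Fintype.card Q : ℝ) + 1)
        - (k : ℝ) * Real.log (M : ℝ) ∧
      K.image (fun p => run δ p v) = {q} :=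
  stmt_6_general δ W R k hW hk L hLub M hMub hMmem q hq
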